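/- arXiv:2507.14607 — 2 statements merged into one kernel-verified Lean document; each statement's English description precedes it below -/
import Mathlib

section
/- Let G⃗ be a digraph with n vertices and m arcs, L(G⃗) = D(G⃗) − A(G⃗) its Laplacian matrix where D(G⃗) is the diagonal in-degree matrix. Then the hook immanantal polynomial Φ_k^L(G⃗,x) = d_{(k,1^{n−k})}(xI_n − L(G⃗)) satisfies (m − n)·Φ_k^L(G⃗,x) + x·(Φ_k^L)'(G⃗,x) = Σ_{e⃗ ∈ E(G⃗)} Φ_k^L(G⃗ − e⃗, x). -/
open Finset Matrix Polynomial BigOperators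

variable {α : Type*} [Fintype α] [DecidableEq α]

/-- The sign of `σ` restricted to an invariant subset `S`, or `0` if `S` is not invariant. -/
def restSign (σ : Equiv.Perm α) (S : Finset α) : ℤ :=
  if h : ∀ x, x ∈ S ↔ σ x ∈ S then Equiv.Perm.sign (σ.subtypePerm (fun x => (h x).symm)) else 0

/-- The trace of `σ` acting on the `r`-th exterior power of the permutation representation. -/
def extTrace (r : ℕ) (σ : Equiv.Perm α) : ℤ :=
  ∑ S ∈ Finset.univ.powersetCard r, restSign σ S

/-- `hookChar k σ` is the value `χ_{(k,1^{n-k})}(σ)` of the irreducible character of the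
symmetric group on `α` (with `n = |α|`) indexed by the hook partition `(k,1^{n-k})`;
it is `0` when the partition is invalid, i.e. unless `1 ≤ k ≤ n`. -/
def hookChar (k : ℕ) (σ : Equiv.Perm α) : ℤ :=
  if 1 ≤ k ∧ k ≤ Fintype.card α then
    ∑ r ∈ Finset.range (Fintype.card α - k + 1),
      (-1) ^ (Fintype.card α - k - r) * extTrace r σ
  else 0

/-- The hook immanant `d_{(k,1^{n-k})}(B)` of a square matrix `B`. -/
def dImm {R : Type*} [CommRing R] (k : ℕ) (B : Matrix α α R) : R :=
  ∑ σ : Equiv.Perm α, (hookChar k σ : R) * ∏ i, B i (σ i)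

/-- The permanent of a square matrix. -/
def perM {R : Type*} [CommRing R] (B : Matrix α α R) : R :=
  ∑ σ : Equiv.Perm α, ∏ i, B i (σ i)

/-- The principal submatrix of `B` with rows and columns indexed by `S`. -/
def subMat {R : Type*} (B : Matrix α α R) (S : Finset α) : Matrix S S R :=
  fun i j => B i j

/-- `B` with the `(i,j)` entry replaced by `0`. -/
def zeroEntry {R : Type*} [Zero R] (B : Matrix α α R) (i j : α) : Matrix α α R :=
  fun s t => if s = i ∧ t = j then 0 else B s t

/-- `B_{(ij)}`: keeps the `(i,j)` entry and all entries outside row `i` and column `j`,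
zeroing the remaining entries of row `i` and column `j`. -/
def parenM {R : Type*} [Zero R] (B : Matrix α α R) (i j : α) : Matrix α α R :=
  fun s t => if (s = i ∧ t = j) ∨ (s ≠ i ∧ t ≠ j) then B s t else 0

/-- `B_{[ij]}`: `B` with both the `(i,j)` and `(j,i)` entries set to `0`. -/
def brackM {R : Type*} [Zero R] (B : Matrix α α R) (i j : α) : Matrix α α R :=
  fun s t => if (s = i ∧ t = j) ∨ (s = j ∧ t = i) then 0 else B s t

/-- The hook immanantal polynomial `Φ_k(B,x) = d_{(k,1^{n-k})}(x Iₙ - B)`. -/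
noncomputable def hookPoly (k : ℕ) (B : Matrix α α ℂ) : Polynomial ℂ :=
  dImm k (charmatrix B)

/-- The permanental polynomial `per(x Iₙ - B)`. -/
noncomputable def perPoly (B : Matrix α α ℂ) : Polynomial ℂ :=
  perM (charmatrix B)

/-- The adjacency matrix of the digraph on `Fin n` with arc set `E`. -/
def adjM (n : ℕ) (E : Finset (Fin n × Fin n)) : Matrix (Fin n) (Fin n) ℂ :=
  fun i j => if (i, j) ∈ E then 1 else 0

/-- The in-degree of vertex `v` in the digraph with arc set `E`. -/
def inDeg (n : ℕ) (E : Finset (Fin n × Fin n)) (v : Fin n) : ℕ :=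
  (E.filter (fun e => e.2 = v)).card

/-- The diagonal in-degree matrix of the digraph with arc set `E`. -/
def degM (n : ℕ) (E : Finset (Fin n × Fin n)) : Matrix (Fin n) (Fin n) ℂ :=
  Matrix.diagonal (fun v => (inDeg n E v : ℂ))

/-- The Laplacian matrix `L = D - A` of the digraph with arc set `E`. -/
def lapM (n : ℕ) (E : Finset (Fin n × Fin n)) : Matrix (Fin n) (Fin n) ℂ :=
  degM n E - adjM n E

/-- The signless Laplacian matrix `Q = D + A` of the digraph with arc set `E`. -/
def qM (n : ℕ) (E : Finset (Fin n × Fin n)) : Matrix (Fin n) (Fin n) ℂ :=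
  degM n E + adjM n E


section AuxHook

lemma derivative_finset_prod' {ι R : Type*} [DecidableEq ι] [CommSemiring R]
    (s : Finset ι) (f : ι → R[X]) :
    derivative (∏ i ∈ s, f i) = ∑ b ∈ s, (∏ a ∈ s.erase b, f a) * derivative (f b) := by
  classical
  simp only [Finset.prod, Finset.sum, Polynomial.derivative_prod, Finset.erase_val]

variable {R : Type*} [CommRing R]

lemma prod_updateColumn' (B : Matrix α α R) (j : α) (u : α → R) (σ : Equiv.Perm α) :
    ∏ i, (B.updateCol j u) i (σ i)
      = u (σ⁻¹ j) * ∏ i ∈ Finset.univ.erase (σ⁻¹ j), B i (σ i) := by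
  rw [← Finset.mul_prod_erase Finset.univ _ (Finset.mem_univ (σ⁻¹ j))]
  congr 1
  · rw [Matrix.updateCol_apply, if_pos (show σ (σ⁻¹ j) = j from Equiv.apply_symm_apply σ j)]
  · refine Finset.prod_congr rfl fun i hi => ?_
    rw [Matrix.updateCol_apply, if_neg]
    intro h
    exact (Finset.mem_erase.mp hi).1 (by rw [← h]; exact (Equiv.symm_apply_apply σ i).symm)

lemma dImm_updateColumn_add (k : ℕ) (B : Matrix α α R) (j : α) (u v : α → R) :
    dImm k (B.updateCol j (fun i => u i + v i))
      = dImm k (B.updateCol j u) + dImm k (B.updateCol j v) := by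
  simp only [dImm, prod_updateColumn', ← Finset.sum_add_distrib]
  refine Finset.sum_congr rfl fun σ _ => ?_
  ring

lemma dImm_updateColumn_sub (k : ℕ) (B : Matrix α α R) (j : α) (u v : α → R) :
    dImm k (B.updateCol j (fun i => u i - v i))
      = dImm k (B.updateCol j u) - dImm k (B.updateCol j v) := by
  simp only [dImm, prod_updateColumn', ← Finset.sum_sub_distrib]
  refine Finset.sum_congr rfl fun σ _ => ?_
  ring

lemma dImm_updateColumn_smul (k : ℕ) (B : Matrix α α R) (j : α) (c : R) (u : α → R) :
    dImm k (B.updateCol j (fun i => c * u i))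
      = c * dImm k (B.updateCol j u) := by
  simp only [dImm, prod_updateColumn', Finset.mul_sum]
  refine Finset.sum_congr rfl fun σ _ => ?_
  ring

lemma dImm_updateColumn_sum {ι : Type*} (k : ℕ) (B : Matrix α α R) (j : α) (s : Finset ι)
    (u : ι → α → R) :
    dImm k (B.updateCol j (fun i => ∑ a ∈ s, u a i))
      = ∑ a ∈ s, dImm k (B.updateCol j (u a)) := by
  classical
  induction s using Finset.induction_on with
  | empty =>
      simp only [Finset.sum_empty, dImm, prod_updateColumn']
      simp
  | insert _ _ h ih =>
      rw [Finset.sum_insert h]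
      rw [show (fun i => ∑ a ∈ insert _ _, u a i) = (fun i => u _ i + ∑ a ∈ _, u a i) from
        funext fun i => Finset.sum_insert h]
      rw [dImm_updateColumn_add, ih]

lemma dImm_updateColumn_self (k : ℕ) (B : Matrix α α R) (j : α) :
    dImm k (B.updateCol j (fun i => B i j)) = dImm k B := by
  rw [Matrix.updateCol_eq_self]

lemma dImm_updateColumn_zero (k : ℕ) (B : Matrix α α R) (j : α) :
    dImm k (B.updateCol j (fun _ => 0)) = 0 := by
  simp [dImm, prod_updateColumn']

lemma derivative_hookPoly (k : ℕ) (B : Matrix α α ℂ) :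
    derivative (hookPoly k B)
      = ∑ j, dImm k ((charmatrix B).updateCol j
          (fun i => if i = j then 1 else 0)) := by
  classical
  unfold hookPoly dImm
  rw [derivative_sum]
  rw [Finset.sum_comm]
  refine Finset.sum_congr rfl fun σ _ => ?_
  rw [derivative_mul]
  rw [show derivative ((hookChar k σ : ℂ[X])) = 0 by
        simp, zero_mul, zero_add]
  rw [derivative_finset_prod']
  rw [Finset.mul_sum]
  rw [← Equiv.sum_comp σ (fun j => (hookChar k σ : ℂ[X]) *
        ∏ i, ((charmatrix B).updateCol j (fun i => if i = j then 1 else 0)) i (σ i))]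
  refine Finset.sum_congr rfl fun i _ => ?_
  rw [prod_updateColumn']
  rw [show σ⁻¹ (σ i) = i from Equiv.symm_apply_apply σ i]
  have : derivative ((charmatrix B) i (σ i)) = if i = σ i then 1 else 0 := by
    by_cases h : i = σ i
    · rw [if_pos h, ← h, charmatrix_apply_eq]; simp
    · rw [if_neg h, charmatrix_apply_ne _ _ _ h]; simp
  rw [this]
  ring

lemma X_mul_deriv_sub (k : ℕ) (B : Matrix α α ℂ) :
    X * derivative (hookPoly k B) - (Fintype.card α : ℂ[X]) * hookPoly k B
      = ∑ j, dImm k ((charmatrix B).updateCol j (fun i => C (B i j))) := by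
  classical
  rw [derivative_hookPoly, Finset.mul_sum]
  have hcard : (Fintype.card α : ℂ[X]) * hookPoly k B
      = ∑ j : α, dImm k ((charmatrix B).updateCol j (fun i => (charmatrix B) i j)) := by
    rw [Finset.sum_congr rfl fun j _ => dImm_updateColumn_self k (charmatrix B) j,
      Finset.sum_const, Finset.card_univ, nsmul_eq_mul]
    rfl
  rw [hcard, ← Finset.sum_sub_distrib]
  refine Finset.sum_congr rfl fun j _ => ?_
  rw [← dImm_updateColumn_smul k (charmatrix B) j X (fun i => if i = j then 1 else 0),
    ← dImm_updateColumn_sub]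
  have hcol : (fun i => (X * if i = j then (1:ℂ[X]) else 0) - charmatrix B i j)
      = fun i => C (B i j) := by
    funext i
    by_cases h : i = j
    · subst h; rw [charmatrix_apply_eq]; simp
    · rw [charmatrix_apply_ne _ _ _ h]; simp [h]
  rw [hcol]

/-- contribution of a single arc to the Laplacian. -/
def arcV {n : ℕ} (e : Fin n × Fin n) (i j : Fin n) : ℂ :=
  if e.2 = j then ((if i = j then 1 else 0) - (if i = e.1 then 1 else 0)) else 0

lemma lapM_eq_sum_arcV (n : ℕ) (E : Finset (Fin n × Fin n)) (i j : Fin n) :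
    lapM n E i j = ∑ e ∈ E, arcV e i j := by
  simp only [lapM, degM, adjM, Matrix.sub_apply, Matrix.diagonal_apply, arcV]
  rw [Finset.sum_ite, Finset.sum_const_zero, add_zero, Finset.sum_sub_distrib]
  have h1 : ∑ e ∈ E.filter (fun e => e.2 = j), (if i = j then (1:ℂ) else 0)
      = if i = j then (inDeg n E j : ℂ) else 0 := by
    rw [Finset.sum_const, inDeg]
    by_cases h : i = j <;> simp [h]
  have h2 : ∑ e ∈ E.filter (fun e => e.2 = j), (if i = e.1 then (1:ℂ) else 0)
      = if (i, j) ∈ E then 1 else 0 := by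
    rw [Finset.sum_filter, ← Finset.sum_ite_eq' E (i, j) (fun _ => (1:ℂ))]
    refine Finset.sum_congr rfl fun e _ => ?_
    by_cases h2j : e.2 = j <;> by_cases h1i : e.1 = i
    · simp [Prod.ext_iff, h2j, h1i, eq_comm]
    · have hne : ¬i = e.1 := fun h => h1i h.symm
      simp [Prod.ext_iff, h2j, h1i, hne]
    · simp [Prod.ext_iff, h2j, h1i, eq_comm]
    · have hne : ¬i = e.1 := fun h => h1i h.symm
      simp [Prod.ext_iff, h2j, h1i, hne]
  rw [h1, h2]
  by_cases h : i = j
  · subst h; rfl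
  · simp [h]

lemma lapM_erase_apply (n : ℕ) (E : Finset (Fin n × Fin n)) {e : Fin n × Fin n}
    (he : e ∈ E) (i j : Fin n) :
    lapM n (E.erase e) i j = lapM n E i j - arcV e i j := by
  rw [lapM_eq_sum_arcV, lapM_eq_sum_arcV, ← Finset.sum_erase_add E _ he]
  ring

lemma charmatrix_lapM_erase (n : ℕ) (E : Finset (Fin n × Fin n)) {e : Fin n × Fin n}
    (he : e ∈ E) :
    charmatrix (lapM n (E.erase e))
      = (charmatrix (lapM n E)).updateCol e.2
          (fun i => charmatrix (lapM n E) i e.2 + C (arcV e i e.2)) := by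
  ext i j
  rw [Matrix.updateCol_apply]
  by_cases hj : j = e.2
  · subst hj
    rw [if_pos rfl, charmatrix_apply, charmatrix_apply, lapM_erase_apply n E he]
    rw [map_sub]
    ring
  · rw [if_neg hj, charmatrix_apply, charmatrix_apply, lapM_erase_apply n E he]
    have : arcV e i j = 0 := by
      rw [arcV, if_neg (fun h => hj h.symm)]
    rw [this]
    ring

lemma hookPoly_lapM_erase (n : ℕ) (k : ℕ) (E : Finset (Fin n × Fin n)) {e : Fin n × Fin n}
    (he : e ∈ E) :
    hookPoly k (lapM n (E.erase e))
      = hookPoly k (lapM n E)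
        + dImm k ((charmatrix (lapM n E)).updateCol e.2
            (fun i => C (arcV e i e.2))) := by
  rw [hookPoly, charmatrix_lapM_erase n E he, dImm_updateColumn_add,
    dImm_updateColumn_self]
  rfl

lemma sum_cols_eq (n k : ℕ) (E : Finset (Fin n × Fin n)) :
    ∑ j, dImm k ((charmatrix (lapM n E)).updateCol j (fun i => C (lapM n E i j)))
      = ∑ e ∈ E, dImm k ((charmatrix (lapM n E)).updateCol e.2
          (fun i => C (arcV e i e.2))) := by
  have hcol : ∀ j : Fin n, (fun i => C (lapM n E i j))
      = fun i => ∑ e ∈ E, C (arcV e i j) := by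
    intro j; funext i; rw [lapM_eq_sum_arcV]; exact map_sum C _ _
  calc ∑ j, dImm k ((charmatrix (lapM n E)).updateCol j (fun i => C (lapM n E i j)))
      = ∑ j, ∑ e ∈ E, dImm k ((charmatrix (lapM n E)).updateCol j
          (fun i => C (arcV e i j))) := by
        refine Finset.sum_congr rfl fun j _ => ?_
        rw [hcol j, dImm_updateColumn_sum]
    _ = ∑ e ∈ E, ∑ j, dImm k ((charmatrix (lapM n E)).updateCol j
          (fun i => C (arcV e i j))) := Finset.sum_comm
    _ = ∑ e ∈ E, dImm k ((charmatrix (lapM n E)).updateCol e.2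
          (fun i => C (arcV e i e.2))) := by
        refine Finset.sum_congr rfl fun e _ => ?_
        refine Finset.sum_eq_single e.2 (fun j _ hj => ?_) (by simp)
        have hz : (fun i => C (arcV e i j)) = fun _ => (0 : ℂ[X]) := by
          funext i
          rw [arcV, if_neg (fun h => hj h.symm), map_zero]
        rw [hz, dImm_updateColumn_zero]

end AuxHook

/-- for a digraph with `n` vertices and `m` arcs (no loops),
`(m − n)·Φ_k^L(G,x) + x·Φ_k'^L(G,x) = Σ_{e ∈ E} Φ_k^L(G − e, x)`. -/
theorem digraph_laplacian_hookPoly_identity (n k : ℕ) (hk1 : 1 ≤ k) (hkn : k ≤ n)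
    (E : Finset (Fin n × Fin n)) (hloop : ∀ e ∈ E, e.1 ≠ e.2) :
    C ((E.card : ℂ) - n) * hookPoly k (lapM n E)
        + X * derivative (hookPoly k (lapM n E))
      = ∑ e ∈ E, hookPoly k (lapM n (E.erase e)) := by
  have hmain := X_mul_deriv_sub k (lapM n E)
  rw [Fintype.card_fin] at hmain
  rw [Finset.sum_congr rfl (fun e he => hookPoly_lapM_erase n k E he),
    Finset.sum_add_distrib, Finset.sum_const, nsmul_eq_mul,
    ← sum_cols_eq n k E, ← hmain]
  have hC : C ((E.card : ℂ) - n) = (E.card : ℂ[X]) - (n : ℂ[X]) := by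
    rw [map_sub]; simp
  rw [hC]
  ring
end

section
/- Let β, γ be real numbers with γ ≠ 0, G⃗ a digraph with n vertices and m arcs, and define Φ(G⃗,x) = d_k(xI_n − βD(G⃗) − γA(G⃗)). Then m·Φ(G⃗,x) = n·Φ(G⃗,x) − x·Φ'(G⃗,x) + Σ_{e⃗∈E(G⃗)} Φ(G⃗ − e⃗, x). -/
open Finset Matrix Polynomial BigOperators

variable {α : Type*} [Fintype α] [DecidableEq α]

namespace HookAux

noncomputable def Bf (β γ : ℝ) (n : ℕ) (E : Finset (Fin n × Fin n)) :
    Matrix (Fin n) (Fin n) ℂ :=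
  (β : ℂ) • degM n E + (γ : ℂ) • adjM n E

noncomputable def w (β γ : ℝ) {n : ℕ} (e : Fin n × Fin n) (i j : Fin n) : ℂ :=
  (if e = (i, j) then (γ : ℂ) else 0) + (if i = j ∧ e.2 = j then (β : ℂ) else 0)

lemma w_eq_zero (β γ : ℝ) {n : ℕ} {e : Fin n × Fin n} {i j : Fin n} (h : e.2 ≠ j) :
    w β γ e i j = 0 := by
  have h1 : ¬ (e = (i, j)) := by rintro rfl; exact h rfl
  have h2 : ¬ (i = j ∧ e.2 = j) := by rintro ⟨-, h2⟩; exact h h2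
  simp [w, h1, h2]

lemma Bf_apply (β γ : ℝ) {n : ℕ} (E : Finset (Fin n × Fin n)) (i j : Fin n) :
    Bf β γ n E i j = ∑ e ∈ E, w β γ e i j := by
  simp only [w]
  rw [Finset.sum_add_distrib]
  have h1 : (∑ e ∈ E, if e = (i, j) then (γ:ℂ) else 0) = ((γ:ℂ) • adjM n E) i j := by
    rw [Finset.sum_ite_eq' E (i,j) (fun _ => (γ:ℂ))]
    simp [adjM, Matrix.smul_apply]
  have h2 : (∑ e ∈ E, if i = j ∧ e.2 = j then (β:ℂ) else 0) = ((β:ℂ) • degM n E) i j := by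
    by_cases hij : i = j
    · subst hij
      simp only [true_and, degM, Matrix.smul_apply, Matrix.diagonal_apply_eq]
      rw [inDeg]
      rw [Finset.sum_ite, Finset.sum_const, Finset.sum_const]
      simp [nsmul_eq_mul, mul_comm]
    · simp [hij, degM, Matrix.smul_apply, Matrix.diagonal_apply_ne _ hij]
  rw [h1, h2, Bf, Matrix.add_apply, add_comm]

lemma Bf_erase (β γ : ℝ) {n : ℕ} {E : Finset (Fin n × Fin n)} {e : Fin n × Fin n}
    (he : e ∈ E) (i j : Fin n) :
    Bf β γ n (E.erase e) i j = Bf β γ n E i j - w β γ e i j := by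
  rw [Bf_apply, Bf_apply, Finset.sum_erase_eq_sub he]

lemma cm_apply {n : ℕ} (B : Matrix (Fin n) (Fin n) ℂ) (i j : Fin n) :
    charmatrix B i j = (if i = j then (X : ℂ[X]) else 0) - C (B i j) := by
  rcases eq_or_ne i j with rfl | h
  · simp [charmatrix_apply_eq]
  · simp [charmatrix_apply_ne _ _ _ h, h]

lemma deriv_prod {ι : Type*} [DecidableEq ι] (s : Finset ι) (f : ι → ℂ[X]) :
    derivative (∏ i ∈ s, f i) = ∑ i ∈ s, (∏ j ∈ s.erase i, f j) * derivative (f i) := by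
  induction s using Finset.induction_on with
  | empty => simp
  | @insert a s ha ih =>
      rw [Finset.prod_insert ha, derivative_mul, ih, Finset.sum_insert ha,
        Finset.erase_insert ha, Finset.mul_sum]
      have h2 : ∀ i ∈ s, f a * ((∏ j ∈ s.erase i, f j) * derivative (f i))
          = (∏ j ∈ (insert a s).erase i, f j) * derivative (f i) := by
        intro i hi
        have hia : i ≠ a := by rintro rfl; exact ha hi
        rw [Finset.erase_insert_of_ne hia.symm, Finset.prod_insert (by simp [ha])]
        ring
      rw [Finset.sum_congr rfl h2]
      ring

end HookAux

namespace HookAux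

lemma key (β γ : ℝ) {n : ℕ} (E : Finset (Fin n × Fin n)) (σ : Equiv.Perm (Fin n)) :
    ∑ e ∈ E, ((∏ i, charmatrix (Bf β γ n E) i (σ i))
        - ∏ i, charmatrix (Bf β γ n (E.erase e)) i (σ i))
      = C (n : ℂ) * (∏ i, charmatrix (Bf β γ n E) i (σ i))
        - X * derivative (∏ i, charmatrix (Bf β γ n E) i (σ i)) := by
  have hrhs : C (n:ℂ) * (∏ i, charmatrix (Bf β γ n E) i (σ i))
        - X * derivative (∏ i, charmatrix (Bf β γ n E) i (σ i))
      = ∑ i : Fin n, (- C (Bf β γ n E i (σ i)))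
          * ∏ j ∈ Finset.univ.erase i, charmatrix (Bf β γ n E) j (σ j) := by
    rw [deriv_prod]
    have hCn : C ((n : ℕ):ℂ) * (∏ i, charmatrix (Bf β γ n E) i (σ i))
        = ∑ _i : Fin n, ∏ j, charmatrix (Bf β γ n E) j (σ j) := by
      simp [Finset.sum_const, Finset.card_univ, nsmul_eq_mul, map_natCast]
    rw [hCn, Finset.mul_sum, ← Finset.sum_sub_distrib]
    refine Finset.sum_congr rfl fun i _ => ?_
    rw [← Finset.mul_prod_erase Finset.univ _ (Finset.mem_univ i), cm_apply]
    by_cases h : i = σ i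
    · rw [if_pos h]
      simp only [derivative_sub, derivative_X, derivative_C, sub_zero]
      ring
    · rw [if_neg h]
      simp only [derivative_sub, derivative_zero, derivative_C, zero_sub, derivative_neg, neg_zero]
      ring
  rw [hrhs]
  have hswap : ∑ i : Fin n, (- C (Bf β γ n E i (σ i)))
          * ∏ j ∈ Finset.univ.erase i, charmatrix (Bf β γ n E) j (σ j)
      = ∑ e ∈ E, ∑ i : Fin n, (- C (w β γ e i (σ i)))
          * ∏ j ∈ Finset.univ.erase i, charmatrix (Bf β γ n E) j (σ j) := by
    rw [Finset.sum_comm]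
    refine Finset.sum_congr rfl fun i _ => ?_
    rw [Bf_apply, map_sum, ← Finset.sum_neg_distrib, Finset.sum_mul]
  rw [hswap]
  refine Finset.sum_congr rfl fun e he => ?_
  have hinner : ∑ i : Fin n, (- C (w β γ e i (σ i)))
          * ∏ j ∈ Finset.univ.erase i, charmatrix (Bf β γ n E) j (σ j)
      = (- C (w β γ e (σ.symm e.2) (σ (σ.symm e.2))))
          * ∏ j ∈ Finset.univ.erase (σ.symm e.2), charmatrix (Bf β γ n E) j (σ j) := by
    refine Finset.sum_eq_single (σ.symm e.2) (fun i _ hi => ?_) (fun h => absurd (Finset.mem_univ _) h)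
    have hne : e.2 ≠ σ i := by
      intro h
      exact hi (by rw [h, Equiv.symm_apply_apply])
    rw [w_eq_zero β γ hne, map_zero, neg_zero, zero_mul]
  rw [hinner]
  have hprod : ∏ j ∈ Finset.univ.erase (σ.symm e.2), charmatrix (Bf β γ n (E.erase e)) j (σ j)
      = ∏ j ∈ Finset.univ.erase (σ.symm e.2), charmatrix (Bf β γ n E) j (σ j) := by
    refine Finset.prod_congr rfl fun j hj => ?_
    have hne : e.2 ≠ σ j := by
      intro h
      exact (Finset.mem_erase.mp hj).1 (by rw [h, Equiv.symm_apply_apply])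
    rw [cm_apply, cm_apply, Bf_erase β γ he, w_eq_zero β γ hne, sub_zero]
  rw [← Finset.mul_prod_erase Finset.univ _ (Finset.mem_univ (σ.symm e.2)),
    ← Finset.mul_prod_erase Finset.univ _ (Finset.mem_univ (σ.symm e.2)), hprod, ← sub_mul]
  congr 1
  rw [cm_apply, cm_apply, Bf_erase β γ he, map_sub]
  ring

end HookAux

/-- for real `β, γ` with `γ ≠ 0` and `Φ(G,x) = d_k(xI − βD(G) − γA(G))`,
`m·Φ(G,x) = n·Φ(G,x) − x·Φ'(G,x) + Σ_{e∈E} Φ(G − e, x)`. -/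
theorem digraph_general_hookPoly_identity (n k : ℕ) (hk1 : 1 ≤ k) (hkn : k ≤ n)
    (β γ : ℝ) (hγ : γ ≠ 0)
    (E : Finset (Fin n × Fin n)) (hloop : ∀ e ∈ E, e.1 ≠ e.2) :
    C (E.card : ℂ) * hookPoly k ((β : ℂ) • degM n E + (γ : ℂ) • adjM n E)
      = C (n : ℂ) * hookPoly k ((β : ℂ) • degM n E + (γ : ℂ) • adjM n E)
        - X * derivative (hookPoly k ((β : ℂ) • degM n E + (γ : ℂ) • adjM n E))
        + ∑ e ∈ E, hookPoly k ((β : ℂ) • degM n (E.erase e) + (γ : ℂ) • adjM n (E.erase e)) := by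
  have hB : ∀ (F : Finset (Fin n × Fin n)),
      (β : ℂ) • degM n F + (γ : ℂ) • adjM n F = HookAux.Bf β γ n F := fun _ => rfl
  simp only [hB, hookPoly, dImm]
  rw [derivative_sum, Finset.mul_sum, Finset.mul_sum, Finset.mul_sum, Finset.sum_comm (s := E),
    ← Finset.sum_sub_distrib, ← Finset.sum_add_distrib]
  refine Finset.sum_congr rfl fun σ _ => ?_
  have h := HookAux.key β γ E σ
  rw [Finset.sum_sub_distrib, Finset.sum_const, nsmul_eq_mul] at h
  rw [show ((E.card : ℕ) : Polynomial ℂ) = C ((E.card : ℕ) : ℂ) from (map_natCast C E.card).symm] at h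
  rw [derivative_intCast_mul, ← Finset.mul_sum]
  linear_combination ((hookChar k σ : ℤ) : Polynomial ℂ) * h
end
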